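/- arXiv:2211.02401 — 2 statements merged into one kernel-verified Lean document; each statement's English description precedes it below -/
import Mathlib

section
/- Let n ≤ m be positive integers and let ξ ∈ ℂ^n ⊗ ℂ^m be a unit vector. Then w(ξ) = 1/(m·‖Tr_B(E_ξ)‖) = 1/(m·‖Tr_A(E_ξ)‖), where ‖·‖ denotes the operator norm. In particular, w(ξ) ≥ 1/m. -/
open scoped ComplexOrder Kronecker Matrix
open Filter

noncomputable section

abbrev Mat (k : ℕ) := Matrix (Fin k) (Fin k) ℂ
abbrev Mat2 (n m : ℕ) := Matrix (Fin n × Fin m) (Fin n × Fin m) ℂ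

/-- A state on a matrix algebra: a unital positive linear functional. -/
def IsState {ι : Type*} [Fintype ι] [DecidableEq ι] (ω : Matrix ι ι ℂ →ₗ[ℂ] ℂ) : Prop :=
  ω 1 = 1 ∧ ∀ x, 0 ≤ ω (xᴴ * x)

/-- Loewner order: `A ≤ B` iff `B - A` is positive semidefinite. -/
def Loewner {ι : Type*} [Fintype ι] (A B : Matrix ι ι ℂ) : Prop := (B - A).PosSemidef

/-- An orthogonal projection: a hermitian idempotent. -/
def IsProjM {ι : Type*} [Fintype ι] (p : Matrix ι ι ℂ) : Prop := p.IsHermitian ∧ p * p = p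

/-- A coupling of states `φ` and `ψ`. -/
def IsCoupling {n m : ℕ} (φ : Mat n →ₗ[ℂ] ℂ) (ψ : Mat m →ₗ[ℂ] ℂ)
    (σ : Mat2 n m →ₗ[ℂ] ℂ) : Prop :=
  IsState σ ∧ (∀ a : Mat n, σ (a ⊗ₖ (1 : Mat m)) = φ a) ∧
    (∀ b : Mat m, σ ((1 : Mat n) ⊗ₖ b) = ψ b)

def alpha {n m : ℕ} (φ : Mat n →ₗ[ℂ] ℂ) (ψ : Mat m →ₗ[ℂ] ℂ) (T : Mat2 n m) : ℝ :=
  sSup {r : ℝ | ∃ σ, IsCoupling φ ψ σ ∧ (σ T).re = r}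

def beta {n m : ℕ} (φ : Mat n →ₗ[ℂ] ℂ) (ψ : Mat m →ₗ[ℂ] ℂ) (T : Mat2 n m) : ℝ :=
  sInf {r : ℝ | ∃ (a : Mat n) (b : Mat m), a.PosSemidef ∧ b.PosSemidef ∧
      Loewner T (a ⊗ₖ (1 : Mat m) + (1 : Mat n) ⊗ₖ b) ∧ (φ a + ψ b).re = r}

/-- For commuting projections `p ⊗ 1` and `1 ⊗ q`, the projection onto the sum of their ranges is
`p ⊗ 1 + 1 ⊗ q - p ⊗ q`. -/
def gamma {n m : ℕ} (φ : Mat n →ₗ[ℂ] ℂ) (ψ : Mat m →ₗ[ℂ] ℂ) (T : Mat2 n m) : ℝ :=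
  sInf {r : ℝ | ∃ (p : Mat n) (q : Mat m), IsProjM p ∧ IsProjM q ∧
      Loewner T (p ⊗ₖ (1 : Mat m) + (1 : Mat n) ⊗ₖ q - p ⊗ₖ q) ∧ (φ p + ψ q).re = r}

/-- The normalised trace, as a state on `M_k`. -/
def ntr (k : ℕ) : Mat k →ₗ[ℂ] ℂ := (k : ℂ)⁻¹ • Matrix.traceLinearMap (Fin k) ℂ ℂ


/-- The quantity `w(ξ)` from Section 3. -/
def wcap {n m : ℕ} (ξ : Fin n × Fin m → ℂ) : ℝ :=
  sInf {r : ℝ | ∃ (a : Mat n) (b : Mat m), a.PosSemidef ∧ b.PosSemidef ∧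
      Loewner (Matrix.vecMulVec ξ (star ξ))
        (Matrix.vecMulVec ξ (star ξ) * (a ⊗ₖ (1 : Mat m) + (1 : Mat n) ⊗ₖ b) *
          Matrix.vecMulVec ξ (star ξ)) ∧
      ((ntr n) a + (ntr m) b).re = r}

/-- The partial trace `Tr_B : M_n ⊗ M_m → M_n`. -/
def trB {n m : ℕ} (T : Mat2 n m) : Mat n := Matrix.of fun i j => ∑ k, T (i, k) (j, k)

/-- The partial trace `Tr_A : M_n ⊗ M_m → M_m`. -/
def trA {n m : ℕ} (T : Mat2 n m) : Mat m := Matrix.of fun k l => ∑ i, T (i, k) (i, l)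

/-- The operator norm of a matrix, acting on Euclidean space. -/
def opNorm {k : ℕ} (M : Mat k) : ℝ := ‖Matrix.toEuclideanCLM (𝕜 := ℂ) M‖


/-! ### Auxiliary lemmas -/

open scoped Matrix.Norms.L2Operator in
lemma opNorm_eq_norm {k : ℕ} (M : Mat k) : opNorm M = ‖M‖ := rfl

lemma quad_le_opNorm {k : ℕ} (A : Mat k) (x : Fin k → ℂ) :
    (star x ⬝ᵥ A *ᵥ x).re ≤ opNorm A * (star x ⬝ᵥ x).re := by
  set x' : EuclideanSpace ℂ (Fin k) := (WithLp.equiv 2 _).symm x with hx'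
  have h1 : star x ⬝ᵥ (A *ᵥ x) =
      inner ℂ x' (Matrix.toEuclideanCLM (𝕜 := ℂ) A x') := by
    exact dotProduct_comm _ _
  have h2 : star x ⬝ᵥ x = inner ℂ x' x' := dotProduct_comm _ _
  rw [h1, h2]
  have h3 : (inner ℂ x' (Matrix.toEuclideanCLM (𝕜 := ℂ) A x') : ℂ).re ≤
      ‖(inner ℂ x' (Matrix.toEuclideanCLM (𝕜 := ℂ) A x') : ℂ)‖ := Complex.re_le_norm _
  refine h3.trans ?_
  have h4 := norm_inner_le_norm (𝕜 := ℂ) x' (Matrix.toEuclideanCLM (𝕜 := ℂ) A x')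
  have h5 := (Matrix.toEuclideanCLM (𝕜 := ℂ) A).le_opNorm x'
  have h6 : (inner ℂ x' x' : ℂ).re = ‖x'‖ ^ 2 := by
    rw [inner_self_eq_norm_sq_to_K]; exact_mod_cast RCLike.ofReal_re (K := ℂ) _
  rw [h6]
  calc _ ≤ ‖x'‖ * ‖Matrix.toEuclideanCLM (𝕜 := ℂ) A x'‖ := h4
    _ ≤ ‖x'‖ * (‖Matrix.toEuclideanCLM (𝕜 := ℂ) A‖ * ‖x'‖) := by
        exact mul_le_mul_of_nonneg_left h5 (norm_nonneg _)
    _ = opNorm A * ‖x'‖ ^ 2 := by rw [opNorm]; ring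

lemma trace_re_nonneg {k : ℕ} {a : Mat k} (ha : a.PosSemidef) : 0 ≤ (a.trace).re := by
  obtain ⟨B, rfl⟩ : ∃ B : Mat k, a = Bᴴ * B := by
    open scoped MatrixOrder in
    obtain ⟨X, hX, -, rfl⟩ := CFC.exists_sqrt_of_isSelfAdjoint_of_quasispectrumRestricts
      ha.isHermitian (QuasispectrumRestricts.nnreal_of_nonneg (Matrix.nonneg_iff_posSemidef.mpr ha))
    exact ⟨X, by rw [show Xᴴ = X from hX]⟩
  rw [Matrix.trace]
  rw [Complex.re_sum]
  refine Finset.sum_nonneg fun j _ => ?_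
  rw [Matrix.diag_apply, Matrix.mul_apply, Complex.re_sum]
  refine Finset.sum_nonneg fun i _ => ?_
  rw [Matrix.conjTranspose_apply]
  simpa [Complex.normSq_apply] using Complex.normSq_nonneg (B i j)

lemma trace_mul_re_le {k : ℕ} {a σ : Mat k} (ha : a.PosSemidef) (_hσ : σ.PosSemidef) :
    ((a * σ).trace).re ≤ opNorm σ * (a.trace).re := by
  obtain ⟨B, rfl⟩ : ∃ B : Mat k, a = Bᴴ * B := by
    open scoped MatrixOrder in
    obtain ⟨X, hX, -, rfl⟩ := CFC.exists_sqrt_of_isSelfAdjoint_of_quasispectrumRestricts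
      ha.isHermitian (QuasispectrumRestricts.nnreal_of_nonneg (Matrix.nonneg_iff_posSemidef.mpr ha))
    exact ⟨X, by rw [show Xᴴ = X from hX]⟩
  have key : (Bᴴ * B * σ).trace = (B * σ * Bᴴ).trace := (Matrix.trace_mul_cycle B σ Bᴴ).symm
  rw [key, Matrix.trace, Complex.re_sum]
  have h2 : ∀ i, ((B * σ * Bᴴ).diag i).re ≤ opNorm σ * (star (star (B i)) ⬝ᵥ (star (B i))).re := by
    intro i
    have := quad_le_opNorm σ (star (B i))
    convert this using 2
    rw [Matrix.diag_apply, Matrix.mul_apply]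
    simp only [dotProduct, Matrix.mulVec, Matrix.mul_apply, Matrix.conjTranspose_apply,
      Pi.star_apply, star_star, dotProduct, Finset.mul_sum, Finset.sum_mul]
    rw [Finset.sum_comm]
    congr 1; ext j; congr 1; ext l; ring
  calc ∑ i, ((B * σ * Bᴴ).diag i).re ≤ ∑ i, opNorm σ * (star (star (B i)) ⬝ᵥ (star (B i))).re :=
        Finset.sum_le_sum fun i _ => h2 i
    _ = opNorm σ * ((Bᴴ * B).trace).re := by
        rw [← Finset.mul_sum]
        congr 1
        rw [Matrix.trace, Complex.re_sum]
        simp only [dotProduct, Pi.star_apply, star_star, Matrix.diag_apply,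
          Matrix.mul_apply, Matrix.conjTranspose_apply, Complex.re_sum]
        rw [Finset.sum_comm]
        congr 1; ext i
        congr 1; ext j
        congr 1; ring

lemma opNorm_psd_attained {k : ℕ} (hk : 0 < k) {ρ : Mat k} (hρ : ρ.PosSemidef) :
    (∃ η : Fin k → ℂ, star η ⬝ᵥ η = 1 ∧ star η ⬝ᵥ ρ *ᵥ η = (opNorm ρ : ℂ)) ∧
      opNorm ρ ≤ (ρ.trace).re := by
  have h : ρ.IsHermitian := hρ.1
  haveI : NeZero k := ⟨hk.ne'⟩
  obtain ⟨i₀, -, hmax⟩ := Finset.exists_max_image Finset.univ h.eigenvalues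
    ⟨0, Finset.mem_univ 0⟩
  set μ : ℝ := h.eigenvalues i₀ with hμdef
  have hμ0 : 0 ≤ μ := hρ.eigenvalues_nonneg i₀
  set η : Fin k → ℂ := ⇑(h.eigenvectorBasis i₀) with hηdef
  have hunit : star η ⬝ᵥ η = 1 := by
    have h1 : (inner ℂ (h.eigenvectorBasis i₀) (h.eigenvectorBasis i₀) : ℂ) = star η ⬝ᵥ η :=
      dotProduct_comm _ _
    rw [← h1, inner_self_eq_norm_sq_to_K, h.eigenvectorBasis.orthonormal.1 i₀]
    norm_num
  have hquad : star η ⬝ᵥ ρ *ᵥ η = (μ : ℂ) := by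
    rw [hηdef, h.mulVec_eigenvectorBasis i₀, RCLike.real_smul_eq_coe_smul (K := ℂ),
      dotProduct_smul, ← hηdef, hunit]
    simp [hμdef]
  set V : Mat k := (h.eigenvectorUnitary : Mat k) with hVdef
  have hV : Vᴴ * V = 1 := by
    rw [← Matrix.star_eq_conjTranspose]
    exact Unitary.coe_star_mul_self h.eigenvectorUnitary
  have hspec : ρ = V * Matrix.diagonal (RCLike.ofReal ∘ h.eigenvalues) * Vᴴ := by
    rw [← Matrix.star_eq_conjTranspose]
    exact h.spectral_theorem
  set D : Mat k := Matrix.diagonal (RCLike.ofReal ∘ h.eigenvalues) with hDdef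
  have hVV : V * Vᴴ = 1 := by
    rw [← Matrix.star_eq_conjTranspose]
    exact Unitary.coe_mul_star_self h.eigenvectorUnitary
  have hσ : ((μ ^ 2 : ℂ) • (1 : Mat k) - ρ * ρ).PosSemidef := by
    have hρ2 : ρ * ρ = V * (D * D) * Vᴴ := by
      conv_lhs => rw [hspec]
      simp only [← Matrix.mul_assoc]
      rw [Matrix.mul_assoc (V * D) Vᴴ V, hV, Matrix.mul_one, Matrix.mul_assoc V D D]
    have hone : V * ((μ ^ 2 : ℂ) • (1 : Mat k)) * Vᴴ = (μ ^ 2 : ℂ) • (1 : Mat k) := by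
      rw [Matrix.mul_smul, Matrix.smul_mul, Matrix.mul_one, hVV]
    have hmid : (μ ^ 2 : ℂ) • (1 : Mat k) - D * D =
        Matrix.diagonal (fun i => ((μ ^ 2 - h.eigenvalues i ^ 2 : ℝ) : ℂ)) := by
      rw [hDdef, Matrix.diagonal_mul_diagonal, Matrix.smul_one_eq_diagonal,
        Matrix.diagonal_sub]
      ext i j
      rcases eq_or_ne i j with rfl | hij
      · simp only [Matrix.diagonal_apply_eq, Pi.sub_apply, Function.comp_apply]
        push_cast
        norm_num [RCLike.ofReal_alg, Complex.coe_algebraMap]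
        rw [pow_two]
      · rw [Matrix.diagonal_apply_ne _ hij, Matrix.diagonal_apply_ne _ hij]
    have hd : ((μ ^ 2 : ℂ) • (1 : Mat k) - ρ * ρ) =
        V * Matrix.diagonal (fun i => ((μ ^ 2 - h.eigenvalues i ^ 2 : ℝ) : ℂ)) * Vᴴ := by
      rw [hρ2, ← hone, ← Matrix.sub_mul, ← Matrix.mul_sub, hmid]
    rw [hd]
    refine Matrix.PosSemidef.mul_mul_conjTranspose_same ?_ V
    refine Matrix.PosSemidef.diagonal ?_
    rw [Pi.le_def]
    intro i
    simp only [Pi.zero_apply]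
    rw [Complex.zero_le_real]
    have h8 := hρ.eigenvalues_nonneg i
    nlinarith [hmax i (Finset.mem_univ i)]
  have hle : opNorm ρ ≤ μ := by
    rw [opNorm]
    refine ContinuousLinearMap.opNorm_le_bound _ hμ0 fun x => ?_
    set y : Fin k → ℂ := WithLp.equiv 2 _ x with hydef
    have hxy : x = (WithLp.equiv 2 _).symm y := rfl
    have hTx : Matrix.toEuclideanCLM (𝕜 := ℂ) ρ x = (WithLp.equiv 2 _).symm (ρ *ᵥ y) := by
      rw [hxy]; rfl
    have hsq : ‖Matrix.toEuclideanCLM (𝕜 := ℂ) ρ x‖ ^ 2 =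
        (star (ρ *ᵥ y) ⬝ᵥ (ρ *ᵥ y)).re := by
      rw [hTx]
      have : inner ℂ ((WithLp.equiv 2 (Fin k → ℂ)).symm (ρ *ᵥ y))
          ((WithLp.equiv 2 (Fin k → ℂ)).symm (ρ *ᵥ y)) = star (ρ *ᵥ y) ⬝ᵥ (ρ *ᵥ y) :=
        dotProduct_comm _ _
      rw [← this, inner_self_eq_norm_sq_to_K]
      exact_mod_cast (RCLike.ofReal_re (K := ℂ) _).symm
    have hquad2 : star (ρ *ᵥ y) ⬝ᵥ (ρ *ᵥ y) = star y ⬝ᵥ ((ρ * ρ) *ᵥ y) := by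
      rw [Matrix.star_mulVec, ← Matrix.mulVec_mulVec, Matrix.dotProduct_mulVec, h.eq,
        Matrix.vecMul_vecMul, ← Matrix.dotProduct_mulVec, Matrix.mulVec_mulVec]
    have hpsd := hσ.re_dotProduct_nonneg y
    have hexp : star y ⬝ᵥ (((μ ^ 2 : ℂ) • (1 : Mat k) - ρ * ρ) *ᵥ y) =
        (μ ^ 2 : ℂ) * (star y ⬝ᵥ y) - star y ⬝ᵥ ((ρ * ρ) *ᵥ y) := by
      rw [Matrix.sub_mulVec, dotProduct_sub, Matrix.smul_mulVec,
        Matrix.one_mulVec, dotProduct_smul]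
      simp [smul_eq_mul]
    have hnormy : (star y ⬝ᵥ y).re = ‖x‖ ^ 2 := by
      have : inner ℂ ((WithLp.equiv 2 (Fin k → ℂ)).symm y)
          ((WithLp.equiv 2 (Fin k → ℂ)).symm y) = star y ⬝ᵥ y :=
        dotProduct_comm _ _
      rw [← hxy] at this
      rw [← this, inner_self_eq_norm_sq_to_K]
      exact_mod_cast RCLike.ofReal_re (K := ℂ) _
    have key : ‖Matrix.toEuclideanCLM (𝕜 := ℂ) ρ x‖ ^ 2 ≤ (μ * ‖x‖) ^ 2 := by
      rw [hsq, hquad2]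
      have h5 : (star y ⬝ᵥ ((ρ * ρ) *ᵥ y)).re ≤ μ ^ 2 * ‖x‖ ^ 2 := by
        have h9 : (0:ℝ) ≤ ((μ ^ 2 : ℂ) * (star y ⬝ᵥ y) - star y ⬝ᵥ ((ρ * ρ) *ᵥ y)).re := by
          rw [← hexp]
          simpa [RCLike.re_to_complex] using hpsd
        have h6 : ((μ ^ 2 : ℂ) * (star y ⬝ᵥ y)).re = μ ^ 2 * ‖x‖ ^ 2 := by
          rw [show ((μ:ℂ) ^ 2) = ((μ ^ 2 : ℝ) : ℂ) by push_cast; ring,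
            Complex.re_ofReal_mul, hnormy]
        rw [Complex.sub_re, h6] at h9
        linarith
      calc (star y ⬝ᵥ ((ρ * ρ) *ᵥ y)).re ≤ μ ^ 2 * ‖x‖ ^ 2 := h5
        _ = (μ * ‖x‖) ^ 2 := by ring
    have h7 : (0:ℝ) ≤ μ * ‖x‖ := mul_nonneg hμ0 (norm_nonneg _)
    nlinarith [norm_nonneg (Matrix.toEuclideanCLM (𝕜 := ℂ) ρ x)]
  have hge : μ ≤ opNorm ρ := by
    have := quad_le_opNorm ρ η
    rw [hquad, hunit] at this
    simpa using this
  have hnorm : opNorm ρ = μ := le_antisymm hle hge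
  refine ⟨⟨η, hunit, by rw [hquad, hnorm]⟩, ?_⟩
  have htr : ρ.trace = ∑ i, ((h.eigenvalues i : ℂ)) := by
    conv_lhs => rw [hspec]
    rw [Matrix.trace_mul_cycle, hV, Matrix.one_mul, Matrix.trace_diagonal]
    rfl
  rw [htr, hnorm, Complex.re_sum]
  have h10 : ∀ i ∈ Finset.univ, (0:ℝ) ≤ ((h.eigenvalues i : ℂ)).re := fun i _ => by
    simpa using hρ.eigenvalues_nonneg i
  have h11 := Finset.single_le_sum h10 (Finset.mem_univ i₀)
  simpa using h11

lemma vecMulVec_psd {k : ℕ} (v : Fin k → ℂ) : (Matrix.vecMulVec v (star v)).PosSemidef := by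
  have : Matrix.vecMulVec v (star v) =
      (Matrix.of fun (_ : Fin 1) j => star (v j))ᴴ *
        (Matrix.of fun (_ : Fin 1) j => star (v j)) := by
    ext i j
    simp [Matrix.mul_apply, Matrix.vecMulVec_apply, Matrix.conjTranspose_apply]
  rw [this]
  exact Matrix.posSemidef_conjTranspose_mul_self _

lemma EAE {ι : Type*} [Fintype ι] [DecidableEq ι] (ξ : ι → ℂ) (A : Matrix ι ι ℂ) :
    Matrix.vecMulVec ξ (star ξ) * A * Matrix.vecMulVec ξ (star ξ) =
      (star ξ ⬝ᵥ A *ᵥ ξ) • Matrix.vecMulVec ξ (star ξ) := by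
  ext p q
  simp only [Matrix.mul_apply, Matrix.vecMulVec_apply, Matrix.smul_apply, dotProduct,
    Matrix.mulVec, Pi.star_apply, smul_eq_mul, Finset.sum_mul, Finset.mul_sum]
  rw [Finset.sum_comm]
  refine Finset.sum_congr rfl fun r _ => ?_
  refine Finset.sum_congr rfl fun s _ => ?_
  ring

lemma E_mulVec {ι : Type*} [Fintype ι] (ξ : ι → ℂ) (hξ : star ξ ⬝ᵥ ξ = 1) :
    Matrix.vecMulVec ξ (star ξ) *ᵥ ξ = ξ := by
  funext p
  have : (Matrix.vecMulVec ξ (star ξ) *ᵥ ξ) p = ξ p * (star ξ ⬝ᵥ ξ) := by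
    simp only [Matrix.mulVec, dotProduct, Matrix.vecMulVec_apply, Pi.star_apply,
      Finset.mul_sum]
    exact Finset.sum_congr rfl fun r _ => by ring
  rw [this, hξ, mul_one]

lemma cA {n m : ℕ} (ξ : Fin n × Fin m → ℂ) (a : Mat n) :
    star ξ ⬝ᵥ ((a ⊗ₖ (1 : Mat m)) *ᵥ ξ) = (a * trB (Matrix.vecMulVec ξ (star ξ))).trace := by
  simp only [Matrix.trace, Matrix.diag_apply, Matrix.mul_apply, trB, Matrix.of_apply,
    dotProduct, Matrix.mulVec, Matrix.kroneckerMap_apply, Matrix.vecMulVec_apply,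
    Pi.star_apply, Matrix.one_apply, Fintype.sum_prod_type, mul_ite, mul_zero, mul_one,
    Finset.mul_sum, Finset.sum_mul]
  simp only [mul_ite, ite_mul, zero_mul, mul_zero, Finset.sum_ite_eq, Finset.mem_univ, if_true]
  refine Finset.sum_congr rfl fun x _ => ?_
  rw [Finset.sum_comm]
  refine Finset.sum_congr rfl fun j _ => Finset.sum_congr rfl fun l _ => by ring

lemma cB {n m : ℕ} (ξ : Fin n × Fin m → ℂ) (b : Mat m) :
    star ξ ⬝ᵥ (((1 : Mat n) ⊗ₖ b) *ᵥ ξ) = (b * trA (Matrix.vecMulVec ξ (star ξ))).trace := by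
  simp only [Matrix.trace, Matrix.diag_apply, Matrix.mul_apply, trA, Matrix.of_apply,
    dotProduct, Matrix.mulVec, Matrix.kroneckerMap_apply, Matrix.vecMulVec_apply,
    Pi.star_apply, Matrix.one_apply, Fintype.sum_prod_type, mul_ite, mul_zero, mul_one,
    Finset.mul_sum, Finset.sum_mul]
  simp only [mul_ite, ite_mul, zero_mul, mul_zero]
  have hcol : ∀ (x : Fin n) (x1 : Fin m),
      (∑ x2 : Fin n, ∑ x3 : Fin m,
        if x = x2 then star (ξ (x, x1)) * (1 * b x1 x3 * ξ (x2, x3)) else 0) =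
      ∑ x3 : Fin m, star (ξ (x, x1)) * (b x1 x3 * ξ (x, x3)) := by
    intro x x1
    rw [Finset.sum_comm]
    simp [Finset.sum_ite_eq]
  simp only [hcol]
  rw [Finset.sum_comm]
  refine Finset.sum_congr rfl fun kk _ => ?_
  rw [Finset.sum_comm]
  refine Finset.sum_congr rfl fun l _ => Finset.sum_congr rfl fun i _ => by ring

lemma psd_map_conj {k : ℕ} {σ : Mat k} (hσ : σ.PosSemidef) :
    (σ.map (starRingEnd ℂ)).PosSemidef := by
  have : σ.map (starRingEnd ℂ) = σᵀ := by
    ext i j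
    have := congrFun (congrFun hσ.1 j) i
    simp only [Matrix.conjTranspose_apply] at this
    simp only [Matrix.map_apply, Matrix.transpose_apply]
    rw [← this]
    simp
  rw [this]
  exact hσ.transpose

lemma opNorm_conj_le {k : ℕ} (hk : 0 < k) {σ : Mat k} (hσ : σ.PosSemidef) :
    opNorm (σ.map (starRingEnd ℂ)) ≤ opNorm σ := by
  obtain ⟨⟨η, hu, hq⟩, -⟩ := opNorm_psd_attained hk (psd_map_conj hσ)
  set ζ : Fin k → ℂ := star η with hζ
  have huζ : star ζ ⬝ᵥ ζ = 1 := by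
    have : star ζ ⬝ᵥ ζ = star (star η ⬝ᵥ η) := by
      simp only [dotProduct, star_sum, hζ, Pi.star_apply, star_mul', star_star]
    rw [this, hu, star_one]
  have hqζ : star ζ ⬝ᵥ σ *ᵥ ζ = (opNorm (σ.map (starRingEnd ℂ)) : ℂ) := by
    have key : star η ⬝ᵥ (σ.map (starRingEnd ℂ)) *ᵥ η = star (star ζ ⬝ᵥ σ *ᵥ ζ) := by
      simp only [dotProduct, Matrix.mulVec, star_sum, hζ, Pi.star_apply, star_mul',
        star_star, Matrix.map_apply, starRingEnd_apply]
    rw [key] at hq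
    have := congrArg star hq
    rwa [star_star, Complex.star_def, Complex.conj_ofReal] at this
  have := quad_le_opNorm σ ζ
  rw [hqζ, huζ] at this
  simpa using this

lemma opNorm_conj {k : ℕ} (hk : 0 < k) {σ : Mat k} (hσ : σ.PosSemidef) :
    opNorm (σ.map (starRingEnd ℂ)) = opNorm σ := by
  refine le_antisymm (opNorm_conj_le hk hσ) ?_
  have h2 := opNorm_conj_le hk (psd_map_conj hσ)
  have h3 : (σ.map (starRingEnd ℂ)).map (starRingEnd ℂ) = σ := by
    ext i j; simp
  rwa [h3] at h2

lemma trB_psd {n m : ℕ} (ξ : Fin n × Fin m → ℂ) :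
    (trB (Matrix.vecMulVec ξ (star ξ))).PosSemidef := by
  have hB : trB (Matrix.vecMulVec ξ (star ξ)) =
      (Matrix.of fun i k => ξ (i, k)) * (Matrix.of fun i k => ξ (i, k))ᴴ := by
    ext i j
    simp only [trB, Matrix.of_apply, Matrix.mul_apply, Matrix.vecMulVec_apply,
      Matrix.conjTranspose_apply, Pi.star_apply]
  rw [hB]
  exact Matrix.posSemidef_self_mul_conjTranspose _

lemma trA_psd {n m : ℕ} (ξ : Fin n × Fin m → ℂ) :
    (trA (Matrix.vecMulVec ξ (star ξ))).PosSemidef := by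
  have hA : trA (Matrix.vecMulVec ξ (star ξ)) =
      ((Matrix.of fun i k => ξ (i, k)).map (starRingEnd ℂ))ᴴ *
        ((Matrix.of fun i k => ξ (i, k)).map (starRingEnd ℂ)) := by
    ext k l
    simp only [trA, Matrix.of_apply, Matrix.mul_apply, Matrix.vecMulVec_apply,
      Matrix.conjTranspose_apply, Matrix.map_apply, Pi.star_apply, starRingEnd_apply, star_star]
  rw [hA]
  exact Matrix.posSemidef_conjTranspose_mul_self _

open scoped Matrix.Norms.L2Operator in
lemma trB_trA_opNorm {n m : ℕ} (hm : 0 < m) (ξ : Fin n × Fin m → ℂ) :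
    opNorm (trB (Matrix.vecMulVec ξ (star ξ))) = opNorm (trA (Matrix.vecMulVec ξ (star ξ))) := by
  set X : Matrix (Fin n) (Fin m) ℂ := Matrix.of fun i k => ξ (i, k) with hX
  set Y : Matrix (Fin n) (Fin m) ℂ := X.map (starRingEnd ℂ) with hY
  have hB : trB (Matrix.vecMulVec ξ (star ξ)) = X * Xᴴ := by
    ext i j
    simp only [trB, Matrix.of_apply, Matrix.mul_apply, Matrix.vecMulVec_apply,
      Matrix.conjTranspose_apply, hX, Pi.star_apply]
  have hA : trA (Matrix.vecMulVec ξ (star ξ)) = Yᴴ * Y := by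
    ext k l
    simp only [trA, Matrix.of_apply, Matrix.mul_apply, Matrix.vecMulVec_apply,
      Matrix.conjTranspose_apply, hY, hX, Matrix.map_apply, Pi.star_apply, starRingEnd_apply,
      star_star]
  have hYY : Yᴴ * Y = (Xᴴ * X).map (starRingEnd ℂ) := by
    ext k l
    simp only [Matrix.mul_apply, Matrix.conjTranspose_apply, Matrix.map_apply, hY,
      starRingEnd_apply, star_star, star_sum, star_mul']
  rw [opNorm_eq_norm, opNorm_eq_norm, hB, hA, hYY]
  have h1 : ‖X * Xᴴ‖ = ‖X‖ * ‖X‖ := by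
    rw [show X * Xᴴ = Xᴴᴴ * Xᴴ by rw [Matrix.conjTranspose_conjTranspose],
      Matrix.l2_opNorm_conjTranspose_mul_self, Matrix.l2_opNorm_conjTranspose]
  have h2 : ‖(Xᴴ * X).map (starRingEnd ℂ)‖ = ‖Xᴴ * X‖ := by
    rw [← opNorm_eq_norm, ← opNorm_eq_norm]
    exact opNorm_conj hm (Matrix.posSemidef_conjTranspose_mul_self X)
  rw [h1, h2, Matrix.l2_opNorm_conjTranspose_mul_self]

lemma psd_smul_real {k : ℕ} {A : Mat k} (hA : A.PosSemidef) {t : ℝ} (ht : 0 ≤ t) :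
    (((t : ℂ)) • A).PosSemidef := by
  refine Matrix.PosSemidef.of_dotProduct_mulVec_nonneg ?_ ?_
  · rw [Matrix.IsHermitian, Matrix.conjTranspose_smul, hA.1.eq]
    congr 1
    simp [Complex.star_def, Complex.conj_ofReal]
  · intro x
    rw [Matrix.smul_mulVec, dotProduct_smul, smul_eq_mul]
    exact mul_nonneg (Complex.zero_le_real.mpr ht) (hA.dotProduct_mulVec_nonneg x)

lemma trace_vecMulVec_mul {k : ℕ} (u : Fin k → ℂ) (ρ : Mat k) :
    (Matrix.vecMulVec u (star u) * ρ).trace = star u ⬝ᵥ ρ *ᵥ u := by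
  simp only [Matrix.trace, Matrix.diag_apply, Matrix.mul_apply, Matrix.vecMulVec_apply,
    dotProduct, Matrix.mulVec, Pi.star_apply, Finset.mul_sum]
  rw [Finset.sum_comm]
  refine Finset.sum_congr rfl fun l _ => Finset.sum_congr rfl fun j _ => by ring

lemma trace_vecMulVec {k : ℕ} (u : Fin k → ℂ) :
    (Matrix.vecMulVec u (star u)).trace = star u ⬝ᵥ u := by
  simp only [Matrix.trace, Matrix.diag_apply, Matrix.vecMulVec_apply, dotProduct,
    Pi.star_apply]
  exact Finset.sum_congr rfl fun i _ => by ring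

/-- Lemma 3.8: `w(ξ) = 1/(m‖Tr_B(E_ξ)‖) = 1/(m‖Tr_A(E_ξ)‖) ≥ 1/m` for a unit vector `ξ`,
`n ≤ m`. -/
theorem stmt14 {n m : ℕ} (hn : 0 < n) (hnm : n ≤ m)
    (ξ : Fin n × Fin m → ℂ) (hξ : star ξ ⬝ᵥ ξ = 1) :
    wcap ξ = 1 / (m * opNorm (trB (Matrix.vecMulVec ξ (star ξ)))) ∧
    wcap ξ = 1 / (m * opNorm (trA (Matrix.vecMulVec ξ (star ξ)))) ∧
    (1 / m : ℝ) ≤ wcap ξ := by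
  have hm : 0 < m := lt_of_lt_of_le hn hnm
  have hm' : (0:ℝ) < (m:ℝ) := by exact_mod_cast hm
  have hn' : (0:ℝ) < (n:ℝ) := by exact_mod_cast hn
  have hnm' : (n:ℝ) ≤ (m:ℝ) := by exact_mod_cast hnm
  set E : Mat2 n m := Matrix.vecMulVec ξ (star ξ) with hE
  set ρA : Mat n := trB E with hρA
  set ρB : Mat m := trA E with hρB
  set M : ℝ := opNorm ρB with hMdef
  have hpsdB : ρB.PosSemidef := trA_psd ξ
  have hpsdA : ρA.PosSemidef := trB_psd ξ
  have hNM : opNorm ρA = M := trB_trA_opNorm hm ξ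
  -- trace of ρB is 1
  have htrB1 : ρB.trace = 1 := by
    have h1 : ρB.trace = ∑ p : Fin n × Fin m, ξ p * star (ξ p) := by
      rw [hρB, hE]
      simp only [Matrix.trace, Matrix.diag_apply, trA, Matrix.of_apply, Matrix.vecMulVec_apply,
        Pi.star_apply, Fintype.sum_prod_type]
      exact Finset.sum_comm
    rw [h1, ← hξ]
    simp only [dotProduct, Pi.star_apply]
    exact Finset.sum_congr rfl fun p _ => by ring
  have htrB1' : (ρB.trace).re = 1 := by rw [htrB1]; simp
  -- bounds on M
  have hM1 : 1 ≤ M * m := by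
    have h1 := trace_mul_re_le (Matrix.PosSemidef.one) hpsdB
    rw [Matrix.one_mul, htrB1'] at h1
    have h2 : ((1 : Mat m).trace).re = (m:ℝ) := by
      rw [Matrix.trace_one]
      simp
    rw [h2] at h1
    exact h1
  have hMpos : 0 < M := by nlinarith
  have hMle1 : M ≤ 1 := by
    have := (opNorm_psd_attained hm hpsdB).2
    rw [htrB1'] at this
    exact this
  obtain ⟨⟨η, hηu, hηq⟩, -⟩ := opNorm_psd_attained hm hpsdB
  -- the defining set of `wcap ξ`
  set S : Set ℝ := {r : ℝ | ∃ (a : Mat n) (b : Mat m), a.PosSemidef ∧ b.PosSemidef ∧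
      Loewner (Matrix.vecMulVec ξ (star ξ))
        (Matrix.vecMulVec ξ (star ξ) * (a ⊗ₖ (1 : Mat m) + (1 : Mat n) ⊗ₖ b) *
          Matrix.vecMulVec ξ (star ξ)) ∧
      ((ntr n) a + (ntr m) b).re = r} with hS
  have hwS : wcap ξ = sInf S := rfl
  -- every element of S is at least 1/(m*M)
  have hlow : ∀ r ∈ S, 1 / ((m:ℝ) * M) ≤ r := by
    rintro r ⟨a, b, ha, hb, hL, hr⟩
    set c : ℂ := star ξ ⬝ᵥ (a ⊗ₖ (1 : Mat m) + (1 : Mat n) ⊗ₖ b) *ᵥ ξ with hc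
    have hEAE := EAE ξ (a ⊗ₖ (1 : Mat m) + (1 : Mat n) ⊗ₖ b)
    have hL' : ((c • Matrix.vecMulVec ξ (star ξ)) - Matrix.vecMulVec ξ (star ξ)).PosSemidef := by
      rw [← hEAE]
      exact hL
    have h0 := hL'.re_dotProduct_nonneg ξ
    have hcval : star ξ ⬝ᵥ ((c • Matrix.vecMulVec ξ (star ξ) - Matrix.vecMulVec ξ (star ξ)) *ᵥ ξ)
        = c - 1 := by
      rw [Matrix.sub_mulVec, dotProduct_sub, Matrix.smul_mulVec,
        dotProduct_smul, E_mulVec ξ hξ, hξ]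
      simp
    rw [hcval] at h0
    have hc1 : 1 ≤ c.re := by
      have : (0:ℝ) ≤ (c - 1).re := by simpa [RCLike.re_to_complex] using h0
      rw [Complex.sub_re] at this
      simpa using this
    have hsplit : c = (a * ρA).trace + (b * ρB).trace := by
      rw [hc, Matrix.add_mulVec, dotProduct_add, cA ξ a, cB ξ b, hρA, hρB, hE]
    set Ta : ℝ := (a.trace).re with hTa
    set Tb : ℝ := (b.trace).re with hTb
    have hTa0 : 0 ≤ Ta := trace_re_nonneg ha
    have hTb0 : 0 ≤ Tb := trace_re_nonneg hb
    have hba : ((a * ρA).trace).re ≤ M * Ta := by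
      have := trace_mul_re_le ha hpsdA
      rwa [hNM] at this
    have hbb : ((b * ρB).trace).re ≤ M * Tb := by
      exact trace_mul_re_le hb hpsdB
    have hcre : c.re ≤ M * Ta + M * Tb := by
      rw [hsplit, Complex.add_re]
      exact add_le_add hba hbb
    have hr' : r = (n:ℝ)⁻¹ * Ta + (m:ℝ)⁻¹ * Tb := by
      rw [← hr]
      have hna : (ntr n) a = ((((n:ℝ)⁻¹ : ℝ)) : ℂ) * a.trace := by
        simp [ntr, Matrix.traceLinearMap]
      have hnb : (ntr m) b = ((((m:ℝ)⁻¹ : ℝ)) : ℂ) * b.trace := by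
        simp [ntr, Matrix.traceLinearMap]
      rw [hna, hnb, Complex.add_re, Complex.re_ofReal_mul, Complex.re_ofReal_mul]
    have hsum : 1 / M ≤ Ta + Tb := by
      rw [div_le_iff₀ hMpos]
      nlinarith
    have hinv : (m:ℝ)⁻¹ ≤ (n:ℝ)⁻¹ := by
      apply inv_anti₀ hn' hnm'
    rw [hr']
    have step1 : 1 / ((m:ℝ) * M) ≤ (m:ℝ)⁻¹ * (Ta + Tb) := by
      rw [one_div, mul_inv]
      refine mul_le_mul_of_nonneg_left ?_ (by positivity)
      rw [← one_div]
      exact hsum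
    refine step1.trans ?_
    have step2 : (m:ℝ)⁻¹ * Ta ≤ (n:ℝ)⁻¹ * Ta := mul_le_mul_of_nonneg_right hinv hTa0
    nlinarith
  -- the bound is attained
  have hmem : 1 / ((m:ℝ) * M) ∈ S := by
    refine ⟨0, ((M⁻¹ : ℝ) : ℂ) • Matrix.vecMulVec η (star η), Matrix.PosSemidef.zero,
      psd_smul_real (vecMulVec_psd η) (by positivity), ?_, ?_⟩
    · have hc : star ξ ⬝ᵥ ((0 : Mat n) ⊗ₖ (1 : Mat m) +
          (1 : Mat n) ⊗ₖ (((M⁻¹ : ℝ) : ℂ) • Matrix.vecMulVec η (star η))) *ᵥ ξ = 1 := by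
        rw [Matrix.add_mulVec, dotProduct_add, cA, cB]
        have h1 : ((0 : Mat n) * trB (Matrix.vecMulVec ξ (star ξ))).trace = 0 := by
          rw [Matrix.zero_mul, Matrix.trace_zero]
        have h2 : ((((M⁻¹ : ℝ) : ℂ) • Matrix.vecMulVec η (star η)) *
            trA (Matrix.vecMulVec ξ (star ξ))).trace = ((M⁻¹ : ℝ) : ℂ) * (M : ℂ) := by
          rw [Matrix.smul_mul, Matrix.trace_smul, trace_vecMulVec_mul]
          have : star η ⬝ᵥ trA (Matrix.vecMulVec ξ (star ξ)) *ᵥ η = (M : ℂ) := hηq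
          rw [this, smul_eq_mul]
        rw [h1, h2, zero_add]
        push_cast
        field_simp
      rw [Loewner, EAE, hc, one_smul, sub_self]
      exact Matrix.PosSemidef.zero
    · have h3 : (ntr n) (0 : Mat n) = 0 := map_zero _
      have h4 : (ntr m) (((M⁻¹ : ℝ) : ℂ) • Matrix.vecMulVec η (star η)) =
          ((m:ℝ)⁻¹ : ℂ) * (((M⁻¹ : ℝ)) : ℂ) := by
        simp only [ntr, LinearMap.smul_apply, Matrix.traceLinearMap_apply, smul_eq_mul,
          Matrix.trace_smul, trace_vecMulVec, hηu]
        push_cast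
        ring
      rw [h3, h4, zero_add]
      rw [show (((m:ℝ)⁻¹ : ℂ) * (((M⁻¹ : ℝ)) : ℂ)) = (((m:ℝ)⁻¹ * (M⁻¹ : ℝ) : ℝ) : ℂ) by
        push_cast; ring]
      rw [Complex.ofReal_re, one_div, mul_inv]
  have hw : wcap ξ = 1 / ((m:ℝ) * M) :=
    le_antisymm (csInf_le ⟨1 / ((m:ℝ) * M), hlow⟩ hmem) (le_csInf ⟨_, hmem⟩ hlow)
  refine ⟨?_, ?_, ?_⟩
  · rw [hw, hNM]
  · rw [hw]
  · rw [hw]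
    rw [one_div, one_div]
    apply inv_anti₀ (by positivity)
    nlinarith


end
end

section
/- Let ξ ∈ ℂ² ⊗ ℂ² be a unit vector and take γ with respect to the normalised traces (tr_2, tr_2). Then γ(E_ξ) = 1 if ξ is entangled (i.e. not separable), and γ(E_ξ) = 1/2 if ξ is separable. -/
open scoped ComplexOrder Kronecker Matrix
open Filter

noncomputable section

/-- Kronecker (tensor) product of vectors. -/
def vecKron {n m : ℕ} (u : Fin n → ℂ) (v : Fin m → ℂ) : Fin n × Fin m → ℂ :=
  fun p => u p.1 * v p.2

/-- A unit vector `ξ ∈ ℂ^n ⊗ ℂ^m` is separable if it is an elementary tensor of unit vectors. -/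
def Separable {n m : ℕ} (ξ : Fin n × Fin m → ℂ) : Prop :=
  ∃ (e : Fin n → ℂ) (f : Fin m → ℂ), star e ⬝ᵥ e = 1 ∧ star f ⬝ᵥ f = 1 ∧ ξ = vecKron e f

/- ################### auxiliary lemmas ################### -/

section Aux

open Matrix

lemma projM_psd {ι : Type*} [Fintype ι] {p : Matrix ι ι ℂ} (hp : IsProjM p) :
    p.PosSemidef := by
  have h2 := hp.2
  nth_rewrite 1 [← hp.1] at h2
  rw [← h2]
  exact Matrix.posSemidef_conjTranspose_mul_self p

lemma vecMulVec_mulVec' {ι : Type*} [Fintype ι] (u v y : ι → ℂ) :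
    (Matrix.vecMulVec u v) *ᵥ y = (v ⬝ᵥ y) • u := by
  funext i
  simp only [Matrix.mulVec, dotProduct, Matrix.vecMulVec_apply, Pi.smul_apply,
    smul_eq_mul]
  rw [Finset.sum_mul]
  exact Finset.sum_congr rfl fun j _ => by ring

lemma fix_of_loewner {ι : Type*} [Fintype ι] {P : Matrix ι ι ℂ}
    (hP : IsProjM P) {ξ : ι → ℂ}
    (h : Loewner (Matrix.vecMulVec ξ (star ξ)) P) : P *ᵥ ξ = ξ := by
  set x := ξ - P *ᵥ ξ with hx
  have hPx : P *ᵥ x = 0 := by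
    rw [hx, Matrix.mulVec_sub, Matrix.mulVec_mulVec, hP.2, sub_self]
  have h0 := h.dotProduct_mulVec_nonneg x
  set c := star ξ ⬝ᵥ x with hc
  have hsx : star x ⬝ᵥ ξ = star c := by
    rw [hc, Matrix.star_dotProduct]
  have hform : star x ⬝ᵥ ((P - Matrix.vecMulVec ξ (star ξ)) *ᵥ x) = -(c * star c) := by
    rw [Matrix.sub_mulVec, hPx, vecMulVec_mulVec', zero_sub, dotProduct_neg,
      dotProduct_smul, ← hc, hsx]
    simp [mul_comm]
  rw [hform] at h0
  have hge : 0 ≤ c * star c := mul_star_self_nonneg c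
  have hc0 : c = 0 := by
    have h00 : c * star c = 0 := le_antisymm (by simpa using neg_nonneg.mp h0) hge
    rw [Complex.star_def, Complex.mul_conj] at h00
    exact Complex.normSq_eq_zero.mp (by exact_mod_cast h00)
  have hxx : star x ⬝ᵥ x = 0 := by
    have hvP : star x ᵥ* P = 0 := by
      rw [← hP.1, ← Matrix.star_mulVec, hPx, star_zero]
    have h2 : star x ⬝ᵥ (P *ᵥ ξ) = 0 := by
      rw [Matrix.dotProduct_mulVec, hvP, zero_dotProduct]
    calc star x ⬝ᵥ x = star x ⬝ᵥ ξ - star x ⬝ᵥ (P *ᵥ ξ) := by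
          rw [hx, dotProduct_sub]
      _ = 0 := by rw [h2, hsx, hc0, star_zero, sub_zero]
  have hx0 : x = 0 := dotProduct_star_self_eq_zero.mp hxx
  have := sub_eq_zero.mp (hx ▸ hx0)
  exact this.symm

lemma vecMulVec_herm {ι : Type*} [Fintype ι] (v : ι → ℂ) :
    (Matrix.vecMulVec v (star v)).IsHermitian := by
  ext i j
  simp [Matrix.conjTranspose_apply, Matrix.vecMulVec_apply, mul_comm]

lemma mul_vecMulVec' {ι : Type*} [Fintype ι] (P : Matrix ι ι ℂ) (u v : ι → ℂ) :
    P * Matrix.vecMulVec u v = Matrix.vecMulVec (P *ᵥ u) v := by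
  ext i j
  simp only [Matrix.mul_apply, Matrix.vecMulVec_apply, Matrix.mulVec, dotProduct,
    Finset.sum_mul]
  exact Finset.sum_congr rfl fun k _ => by ring

lemma loewner_of_fix {ι : Type*} [Fintype ι] {P : Matrix ι ι ℂ}
    (hP : IsProjM P) {ξ : ι → ℂ} (hξ : star ξ ⬝ᵥ ξ = 1)
    (h : P *ᵥ ξ = ξ) : Loewner (Matrix.vecMulVec ξ (star ξ)) P := by
  set E := Matrix.vecMulVec ξ (star ξ) with hE
  have hEherm : E.IsHermitian := vecMulVec_herm ξ
  have hPE : P * E = E := by rw [hE, mul_vecMulVec', h]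
  have hEP : E * P = E := by
    have := congrArg Matrix.conjTranspose hPE
    rwa [Matrix.conjTranspose_mul, hEherm.eq, hP.1] at this
  have hEE : E * E = E := by
    rw [hE, mul_vecMulVec', vecMulVec_mulVec', hξ, one_smul]
  apply projM_psd
  constructor
  · exact hP.1.sub hEherm
  · rw [Matrix.sub_mul, Matrix.mul_sub, Matrix.mul_sub, hPE, hEP, hEE, hP.2]
    abel

lemma isProjM_vecMulVec {ι : Type*} [Fintype ι] {v : ι → ℂ} (hv : star v ⬝ᵥ v = 1) :
    IsProjM (Matrix.vecMulVec v (star v)) :=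
  ⟨vecMulVec_herm v, by rw [mul_vecMulVec', vecMulVec_mulVec', hv, one_smul]⟩

lemma trace_vecMulVec' {ι : Type*} [Fintype ι] (v : ι → ℂ) :
    (Matrix.vecMulVec v (star v)).trace = star v ⬝ᵥ v := by
  simp only [Matrix.trace, Matrix.diag, Matrix.vecMulVec_apply, dotProduct]
  exact Finset.sum_congr rfl fun i _ => by simp [mul_comm]

lemma kron_herm {n m : ℕ} {p : Mat n} {q : Mat m} (hp : p.IsHermitian) (hq : q.IsHermitian) :
    (p ⊗ₖ q).IsHermitian := by
  have hp' : ∀ a b, star (p b a) = p a b := fun a b => by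
    conv_rhs => rw [← hp.eq]
    simp [Matrix.conjTranspose_apply]
  have hq' : ∀ a b, star (q b a) = q a b := fun a b => by
    conv_rhs => rw [← hq.eq]
    simp [Matrix.conjTranspose_apply]
  ext ⟨i, j⟩ ⟨k, l⟩
  simp only [Matrix.conjTranspose_apply, Matrix.kroneckerMap_apply, star_mul', hp', hq']

lemma isProjM_kronE {n m : ℕ} {p : Mat n} {q : Mat m} (hp : IsProjM p) (hq : IsProjM q) :
    IsProjM (p ⊗ₖ (1 : Mat m) + (1 : Mat n) ⊗ₖ q - p ⊗ₖ q) := by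
  constructor
  · exact ((kron_herm hp.1 Matrix.isHermitian_one).add
      (kron_herm Matrix.isHermitian_one hq.1)).sub (kron_herm hp.1 hq.1)
  · simp only [Matrix.sub_mul, Matrix.mul_sub, Matrix.add_mul, Matrix.mul_add,
      ← Matrix.mul_kronecker_mul, hp.2, hq.2, one_mul, mul_one]
    abel

lemma vecKron_dot {n m : ℕ} (e u : Fin n → ℂ) (f v : Fin m → ℂ) :
    star (vecKron e f) ⬝ᵥ vecKron u v = (star e ⬝ᵥ u) * (star f ⬝ᵥ v) := by
  simp only [dotProduct, Pi.star_apply, vecKron, Fintype.sum_prod_type,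
    Finset.sum_mul_sum]
  refine Finset.sum_congr rfl fun i _ => Finset.sum_congr rfl fun j _ => ?_
  rw [star_mul']
  ring


lemma isProjM_kron {n m : ℕ} {p : Mat n} {q : Mat m} (hp : IsProjM p) (hq : IsProjM q) :
    IsProjM (p ⊗ₖ q) :=
  ⟨kron_herm hp.1 hq.1, by rw [← Matrix.mul_kronecker_mul, hp.2, hq.2]⟩

lemma eig01 {p : Mat 2} (hp : IsProjM p) (i : Fin 2) :
    hp.1.eigenvalues i = 0 ∨ hp.1.eigenvalues i = 1 := by
  have key : ∀ (v : Fin 2 → ℂ) (l : ℝ), v ≠ 0 → p *ᵥ v = l • v → l = 0 ∨ l = 1 := by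
    intro v l hvne hv
    have hv2 : p *ᵥ (p *ᵥ v) = p *ᵥ v := by
      rw [Matrix.mulVec_mulVec, hp.2]
    rw [hv, Matrix.mulVec_smul, hv, smul_smul] at hv2
    have hz : (l * l - l) • v = 0 := by
      rw [sub_smul, hv2, sub_self]
    rcases smul_eq_zero.mp hz with h | h
    · have h2 : l * (l - 1) = 0 := by ring_nf; linarith [h]
      rcases mul_eq_zero.mp h2 with h3 | h3
      · exact Or.inl h3
      · exact Or.inr (by linarith)
    · exact absurd h hvne
  refine key _ _ ?_ (hp.1.mulVec_eigenvectorBasis i)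
  intro hcontra
  have hb0 : hp.1.eigenvectorBasis i = 0 := by
    ext k
    exact congrFun hcontra k
  have hnorm := hp.1.eigenvectorBasis.orthonormal.1 i
  rw [hb0, norm_zero] at hnorm
  norm_num at hnorm

lemma proj_classify {p : Mat 2} (hp : IsProjM p) :
    p = 0 ∨ (∃ v : Fin 2 → ℂ, star v ⬝ᵥ v = 1 ∧ p = Matrix.vecMulVec v (star v)) ∨ p = 1 := by
  have hspec := hp.1.spectral_theorem
  set U : Mat 2 := (hp.1.eigenvectorUnitary : Mat 2) with hU
  have hUU : star U * U = 1 := Unitary.coe_star_mul_self _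
  have hUU' : U * star U = 1 := Unitary.coe_mul_star_self _
  have hcol : ∀ j : Fin 2, star (fun k => U k j) ⬝ᵥ (fun k => U k j) = 1 := by
    intro j
    have h1 : (star U * U) j j = (1 : Mat 2) j j := by rw [hUU]
    simpa [Matrix.mul_apply, Matrix.one_apply, Matrix.star_apply, dotProduct]
      using h1
  have hentry : ∀ a b, p a b =
      ∑ c : Fin 2, U a c * (RCLike.ofReal ∘ hp.1.eigenvalues : Fin 2 → ℂ) c * star (U b c) := by
    intro a b
    conv_lhs => rw [hspec]
    rw [Unitary.conjStarAlgAut_apply, ← hU, Matrix.mul_apply]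
    refine Finset.sum_congr rfl fun c _ => ?_
    rw [Matrix.mul_diagonal, Matrix.star_apply]
  rcases eig01 hp 0 with h0 | h0 <;> rcases eig01 hp 1 with h1 | h1
  · -- (0,0) : p = 0
    refine Or.inl ?_
    ext a b
    rw [hentry a b, Fin.sum_univ_two]
    simp [h0, h1]
  · -- (0,1) : rank one, column 1
    refine Or.inr (Or.inl ⟨fun k => U k 1, hcol 1, ?_⟩)
    ext a b
    rw [hentry a b, Fin.sum_univ_two]
    simp [h0, h1, Matrix.vecMulVec_apply]
  · -- (1,0) : rank one, column 0
    refine Or.inr (Or.inl ⟨fun k => U k 0, hcol 0, ?_⟩)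
    ext a b
    rw [hentry a b, Fin.sum_univ_two]
    simp [h0, h1, Matrix.vecMulVec_apply]
  · -- (1,1) : p = 1
    refine Or.inr (Or.inr ?_)
    have hd : Matrix.diagonal (RCLike.ofReal ∘ hp.1.eigenvalues : Fin 2 → ℂ) = (1 : Mat 2) := by
      have hfun : (RCLike.ofReal ∘ hp.1.eigenvalues : Fin 2 → ℂ) = fun _ => 1 := by
        funext a
        fin_cases a <;> simp [h0, h1]
      rw [hfun, Matrix.diagonal_one]
    rw [hspec, Unitary.conjStarAlgAut_apply, ← hU, hd, mul_one, hUU']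


lemma sep_of_right {ξ : Fin 2 × Fin 2 → ℂ} (hξ : star ξ ⬝ᵥ ξ = 1) {v : Fin 2 → ℂ}
    (hv : star v ⬝ᵥ v = 1)
    (h : ((1 : Mat 2) ⊗ₖ Matrix.vecMulVec v (star v)) *ᵥ ξ = ξ) : Separable ξ := by
  set e : Fin 2 → ℂ := fun i => ∑ l : Fin 2, star (v l) * ξ (i, l) with he
  have hkey : ξ = vecKron e v := by
    funext z
    obtain ⟨i, j⟩ := z
    have hh := congrFun h (i, j)
    rw [← hh]
    simp only [Matrix.mulVec, dotProduct, Fintype.sum_prod_type,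
      Matrix.kroneckerMap_apply, Matrix.one_apply, Matrix.vecMulVec_apply, Pi.star_apply,
      vecKron, he, Fin.sum_univ_two, Complex.star_def]
    fin_cases i <;> fin_cases j <;> simp <;> ring_nf
  have he1 : star e ⬝ᵥ e = 1 := by
    have := hξ
    rw [hkey, vecKron_dot, hv, mul_one] at this
    exact this
  exact ⟨e, v, he1, hv, hkey⟩

lemma sep_of_left {ξ : Fin 2 × Fin 2 → ℂ} (hξ : star ξ ⬝ᵥ ξ = 1) {v : Fin 2 → ℂ}
    (hv : star v ⬝ᵥ v = 1)
    (h : (Matrix.vecMulVec v (star v) ⊗ₖ (1 : Mat 2)) *ᵥ ξ = ξ) : Separable ξ := by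
  set f : Fin 2 → ℂ := fun j => ∑ k : Fin 2, star (v k) * ξ (k, j) with hf
  have hkey : ξ = vecKron v f := by
    funext z
    obtain ⟨i, j⟩ := z
    have hh := congrFun h (i, j)
    rw [← hh]
    simp only [Matrix.mulVec, dotProduct, Fintype.sum_prod_type,
      Matrix.kroneckerMap_apply, Matrix.one_apply, Matrix.vecMulVec_apply, Pi.star_apply,
      vecKron, hf, Fin.sum_univ_two, Complex.star_def]
    fin_cases i <;> fin_cases j <;> simp <;> ring_nf
  have hf1 : star f ⬝ᵥ f = 1 := by
    have := hξ
    rw [hkey, vecKron_dot, hv, one_mul] at this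
    exact this
  exact ⟨v, f, hv, hf1, hkey⟩

lemma fix_left {e f : Fin 2 → ℂ} (he : star e ⬝ᵥ e = 1) :
    ((Matrix.vecMulVec e (star e)) ⊗ₖ (1 : Mat 2)) *ᵥ vecKron e f = vecKron e f := by
  funext z
  obtain ⟨i, j⟩ := z
  have h2 : (starRingEnd ℂ) (e 0) * e 0 + (starRingEnd ℂ) (e 1) * e 1 = 1 := by
    simpa only [dotProduct, Pi.star_apply, Fin.sum_univ_two, Complex.star_def] using he
  simp only [Matrix.mulVec, dotProduct, Fintype.sum_prod_type,
    Matrix.kroneckerMap_apply, Matrix.one_apply, Matrix.vecMulVec_apply, Pi.star_apply,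
    vecKron, Fin.sum_univ_two, Complex.star_def]
  fin_cases j
  · simp
    linear_combination (e i * f 0) * h2
  · simp
    linear_combination (e i * f 1) * h2


lemma ntr_zero : (ntr 2) (0 : Mat 2) = 0 := map_zero _

lemma ntr_one : (ntr 2) (1 : Mat 2) = 1 := by
  simp [ntr, Matrix.trace_one]

lemma ntr_rank1 {v : Fin 2 → ℂ} (hv : star v ⬝ᵥ v = 1) :
    (ntr 2) (Matrix.vecMulVec v (star v)) = (((1:ℝ)/2 : ℝ) : ℂ) := by
  simp [ntr, trace_vecMulVec', hv]
  have h2 : (starRingEnd ℂ) (v 0) * v 0 + (starRingEnd ℂ) (v 1) * v 1 = 1 := by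
    simpa only [dotProduct, Pi.star_apply, Fin.sum_univ_two, Complex.star_def] using hv
  linear_combination h2

lemma elem_bound {ξ : Fin 2 × Fin 2 → ℂ} (hξ : star ξ ⬝ᵥ ξ = 1) {p q : Mat 2}
    (hp : IsProjM p) (hq : IsProjM q)
    (hle : Loewner (Matrix.vecMulVec ξ (star ξ))
      (p ⊗ₖ (1 : Mat 2) + (1 : Mat 2) ⊗ₖ q - p ⊗ₖ q)) :
    (1/2 : ℝ) ≤ ((ntr 2) p + (ntr 2) q).re ∧
      (Separable ξ ∨ (1 : ℝ) ≤ ((ntr 2) p + (ntr 2) q).re) := by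
  have hone : IsProjM (1 : Mat 2) := ⟨Matrix.isHermitian_one, one_mul 1⟩
  rcases proj_classify hp with hp0 | ⟨v, hv, hpv⟩ | hp1 <;>
    rcases proj_classify hq with hq0 | ⟨w, hw, hqw⟩ | hq1
  · -- (0,0) : contradiction
    exfalso
    rw [hp0, hq0] at hle
    have hE : (0 : Mat 2) ⊗ₖ (1 : Mat 2) + (1 : Mat 2) ⊗ₖ (0 : Mat 2)
        - (0 : Mat 2) ⊗ₖ (0 : Mat 2) = (0 : Mat2 2 2) := by
      simp
    rw [hE] at hle
    have hfix := fix_of_loewner ⟨Matrix.isHermitian_zero, by simp⟩ hle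
    rw [Matrix.zero_mulVec] at hfix
    rw [← hfix] at hξ
    simp at hξ
  · -- (0, rank1) : separable, cost 1/2
    rw [hp0, hqw] at hle ⊢
    have hE : (0 : Mat 2) ⊗ₖ (1 : Mat 2) + (1 : Mat 2) ⊗ₖ (Matrix.vecMulVec w (star w))
        - (0 : Mat 2) ⊗ₖ (Matrix.vecMulVec w (star w))
        = (1 : Mat 2) ⊗ₖ (Matrix.vecMulVec w (star w)) := by
      simp
    rw [hE] at hle
    have hfix := fix_of_loewner (isProjM_kron hone (isProjM_vecMulVec hw)) hle
    have hsep := sep_of_right hξ hw hfix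
    refine ⟨?_, Or.inl hsep⟩
    rw [ntr_zero, ntr_rank1 hw, zero_add, Complex.ofReal_re]
  · -- (0, 1) : cost 1
    rw [hp0, hq1, ntr_zero, ntr_one, zero_add, Complex.one_re]
    exact ⟨by norm_num, Or.inr le_rfl⟩
  · -- (rank1, 0) : separable, cost 1/2
    rw [hpv, hq0] at hle ⊢
    have hE : (Matrix.vecMulVec v (star v)) ⊗ₖ (1 : Mat 2) + (1 : Mat 2) ⊗ₖ (0 : Mat 2)
        - (Matrix.vecMulVec v (star v)) ⊗ₖ (0 : Mat 2)
        = (Matrix.vecMulVec v (star v)) ⊗ₖ (1 : Mat 2) := by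
      simp
    rw [hE] at hle
    have hfix := fix_of_loewner (isProjM_kron (isProjM_vecMulVec hv) hone) hle
    have hsep := sep_of_left hξ hv hfix
    refine ⟨?_, Or.inl hsep⟩
    rw [ntr_zero, ntr_rank1 hv, add_zero, Complex.ofReal_re]
  · -- (rank1, rank1) : cost 1
    rw [hpv, hqw, ntr_rank1 hv, ntr_rank1 hw, ← Complex.ofReal_add, Complex.ofReal_re]
    exact ⟨by norm_num, Or.inr (by norm_num)⟩
  · -- (rank1, 1) : cost 3/2
    rw [hpv, hq1, ntr_rank1 hv, ntr_one, Complex.add_re, Complex.ofReal_re, Complex.one_re]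
    exact ⟨by norm_num, Or.inr (by norm_num)⟩
  · -- (1, 0) : cost 1
    rw [hp1, hq0, ntr_one, ntr_zero, add_zero, Complex.one_re]
    exact ⟨by norm_num, Or.inr le_rfl⟩
  · -- (1, rank1) : cost 3/2
    rw [hp1, hqw, ntr_one, ntr_rank1 hw, Complex.add_re, Complex.ofReal_re, Complex.one_re]
    exact ⟨by norm_num, Or.inr (by norm_num)⟩
  · -- (1, 1) : cost 2
    rw [hp1, hq1, ntr_one, Complex.add_re, Complex.one_re]
    exact ⟨by norm_num, Or.inr (by norm_num)⟩

end Aux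

/-- Proposition 3.11 (ii): for a unit vector `ξ ∈ ℂ² ⊗ ℂ²` (normalised traces),
`γ(E_ξ) = 1` if `ξ` is entangled, and `γ(E_ξ) = 1/2` if `ξ` is separable. -/
theorem stmt19 (ξ : Fin 2 × Fin 2 → ℂ) (hξ : star ξ ⬝ᵥ ξ = 1) :
    (¬ Separable ξ → gamma (ntr 2) (ntr 2) (Matrix.vecMulVec ξ (star ξ)) = 1) ∧
    (Separable ξ → gamma (ntr 2) (ntr 2) (Matrix.vecMulVec ξ (star ξ)) = 1 / 2) := by
  have hone : IsProjM (1 : Mat 2) := ⟨Matrix.isHermitian_one, one_mul 1⟩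
  have hgamma : gamma (ntr 2) (ntr 2) (Matrix.vecMulVec ξ (star ξ)) =
      sInf {r : ℝ | ∃ p q : Mat 2, IsProjM p ∧ IsProjM q ∧
        Loewner (Matrix.vecMulVec ξ (star ξ))
          (p ⊗ₖ (1 : Mat 2) + (1 : Mat 2) ⊗ₖ q - p ⊗ₖ q) ∧
        ((ntr 2) p + (ntr 2) q).re = r} := rfl
  have hmem1 : (1:ℝ) ∈ {r : ℝ | ∃ p q : Mat 2, IsProjM p ∧ IsProjM q ∧
      Loewner (Matrix.vecMulVec ξ (star ξ))
        (p ⊗ₖ (1 : Mat 2) + (1 : Mat 2) ⊗ₖ q - p ⊗ₖ q) ∧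
      ((ntr 2) p + (ntr 2) q).re = r} := by
    refine ⟨1, 0, hone, ⟨Matrix.isHermitian_zero, by simp⟩, ?_, ?_⟩
    · have hE : (1 : Mat 2) ⊗ₖ (1 : Mat 2) + (1 : Mat 2) ⊗ₖ (0 : Mat 2)
          - (1 : Mat 2) ⊗ₖ (0 : Mat 2) = (1 : Mat2 2 2) := by
        simp [Matrix.one_kronecker_one]
      rw [hE]
      exact loewner_of_fix ⟨Matrix.isHermitian_one, one_mul 1⟩ hξ (Matrix.one_mulVec ξ)
    · rw [ntr_one, ntr_zero, add_zero, Complex.one_re]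
  have hlb2 : ∀ r ∈ {r : ℝ | ∃ p q : Mat 2, IsProjM p ∧ IsProjM q ∧
      Loewner (Matrix.vecMulVec ξ (star ξ))
        (p ⊗ₖ (1 : Mat 2) + (1 : Mat 2) ⊗ₖ q - p ⊗ₖ q) ∧
      ((ntr 2) p + (ntr 2) q).re = r},
      (1/2 : ℝ) ≤ r ∧ (Separable ξ ∨ (1:ℝ) ≤ r) := by
    rintro r ⟨p, q, hp, hq, hle, hr⟩
    rw [← hr]
    exact elem_bound hξ hp hq hle
  constructor
  · intro hns
    rw [hgamma]
    refine le_antisymm (csInf_le ⟨1/2, fun r hr => (hlb2 r hr).1⟩ hmem1) ?_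
    refine le_csInf ⟨1, hmem1⟩ fun r hr => ?_
    rcases (hlb2 r hr).2 with h | h
    · exact absurd h hns
    · exact h
  · intro hsep
    rw [hgamma]
    obtain ⟨e, f, he, hf, hef⟩ := hsep
    have hmemhalf : ((1:ℝ)/2 : ℝ) ∈ {r : ℝ | ∃ p q : Mat 2, IsProjM p ∧ IsProjM q ∧
        Loewner (Matrix.vecMulVec ξ (star ξ))
          (p ⊗ₖ (1 : Mat 2) + (1 : Mat 2) ⊗ₖ q - p ⊗ₖ q) ∧
        ((ntr 2) p + (ntr 2) q).re = r} := by
      refine ⟨Matrix.vecMulVec e (star e), 0, isProjM_vecMulVec he,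
        ⟨Matrix.isHermitian_zero, by simp⟩, ?_, ?_⟩
      · have hE : (Matrix.vecMulVec e (star e)) ⊗ₖ (1 : Mat 2) + (1 : Mat 2) ⊗ₖ (0 : Mat 2)
            - (Matrix.vecMulVec e (star e)) ⊗ₖ (0 : Mat 2)
            = (Matrix.vecMulVec e (star e)) ⊗ₖ (1 : Mat 2) := by
          simp
        rw [hE]
        refine loewner_of_fix (isProjM_kron (isProjM_vecMulVec he) hone) hξ ?_
        rw [hef]
        exact fix_left he
      · rw [ntr_rank1 he, ntr_zero, add_zero, Complex.ofReal_re]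
    exact le_antisymm (csInf_le ⟨1/2, fun r hr => (hlb2 r hr).1⟩ hmemhalf)
      (le_csInf ⟨1/2, hmemhalf⟩ fun r hr => (hlb2 r hr).1)

end
end
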